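/- Let C be a Brown category. Then every diagram X : I → F, where I is a small filtered category and F is the category of compact objects, admits a minimal weak colimit; moreover, if U is the vertex of a minimal weak colimit cocone and V is the vertex of any weak colimit cocone on the same diagram, then U is a retract of V. -/

import Mathlib

/-!
Formalization of statements from N. P. Strickland,
"Axiomatic stable homotopy --- a survey" (arXiv:math/0307143).
-/

open CategoryTheory CategoryTheory.Limits CategoryTheory.Pretriangulated

universe w v u

namespace AxStable

variable {C : Type u} [Category.{v} C]

section Compact

variable [Preadditive C]

/-- The canonical map `⊕ᵢ Hom(A, Xᵢ) →+ Hom(A, ∐ᵢ Xᵢ)`. -/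
noncomputable def coprodComparison {ι : Type w} (A : C) (X : ι → C) [HasCoproduct X] :
    DirectSum ι (fun i => A ⟶ X i) →+ (A ⟶ ∐ X) :=
  letI := Classical.decEq ι
  DirectSum.toAddMonoid fun i =>
    AddMonoidHom.mk' (fun g => g ≫ Sigma.ι X i) (fun _ _ => Preadditive.add_comp _ _ _ _ _ _)

variable [HasCoproducts.{v} C]

/-- An object `A` is compact (small) if the canonical map `⊕ᵢ Hom(A, Xᵢ) → Hom(A, ∐ᵢ Xᵢ)`
is bijective for every set-indexed family `X`. -/
def IsCompactObj (A : C) : Prop :=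
  ∀ (ι : Type v) (X : ι → C), Function.Bijective (coprodComparison A X)

variable (C) in
/-- The full subcategory `F` of compact objects of `C`. -/
abbrev Cpt := ObjectProperty.FullSubcategory (fun A : C => IsCompactObj A)

variable (C) in
/-- The inclusion `F ⥤ C` of the compact objects. -/
abbrev cptInclusion : Cpt C ⥤ C := ObjectProperty.ι _

/-- The restricted Yoneda functor `h` on objects: `h_X = Hom_C(-, X)` restricted to the
compact objects, an object of the category `A` of additive functors `Fᵒᵖ ⥤ Ab`. -/
noncomputable def hFunctor (X : C) : (Cpt C)ᵒᵖ ⥤ AddCommGrpCat.{v} :=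
  (cptInclusion C).op ⋙ preadditiveYoneda.obj X

/-- The restricted Yoneda functor `h` on morphisms. -/
noncomputable def hMap {X Y : C} (u : X ⟶ Y) : hFunctor X ⟶ hFunctor Y :=
  CategoryTheory.Functor.whiskerLeft _ (preadditiveYoneda.map u)

variable (C) in
/-- Fullness of the restricted Yoneda functor `h : C → A`: every natural transformation
`h_X ⟶ h_Y` is of the form `h_u` for a morphism `u : X ⟶ Y`. -/
def HIsFull : Prop :=
  ∀ (X Y : C) (φ : hFunctor X ⟶ hFunctor Y), ∃ u : X ⟶ Y, hMap u = φ

end Compact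

section Triangulated

variable [Preadditive C] [HasZeroObject C] [HasShift C ℤ]
  [∀ n : ℤ, (shiftFunctor C n).Additive] [Pretriangulated C] [HasCoproducts.{v} C]

variable (C) in
/-- `C` is compactly generated if there is a set `G` of compact objects such that any object
`X` with `Hom(Σⁿ A, X) = 0` for all `A ∈ G` and `n : ℤ` is a zero object. -/
def CompactlyGenerated : Prop :=
  ∃ G : Set C, (∀ A ∈ G, IsCompactObj A) ∧
    ∀ X : C, (∀ A ∈ G, ∀ n : ℤ, ∀ f : (shiftFunctor C n).obj A ⟶ X, f = 0) → IsZero X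

/-- A functor `H : Fᵒᵖ ⥤ Ab` is cohomological if it is additive and sends every distinguished
triangle `X ⟶ Y ⟶ Z ⟶ ΣX` with compact vertices to an exact sequence `H(Z) → H(Y) → H(X)`. -/
def IsCohomological (H : (Cpt C)ᵒᵖ ⥤ AddCommGrpCat.{v}) : Prop :=
  H.Additive ∧
  ∀ (T : Triangle C) (_ : T ∈ (distTriang C)) (h1 : IsCompactObj T.obj₁)
    (h2 : IsCompactObj T.obj₂) (h3 : IsCompactObj T.obj₃),
    Function.Exact
      (H.map (Quiver.Hom.op (show (⟨T.obj₂, h2⟩ : Cpt C) ⟶ ⟨T.obj₃, h3⟩ from ObjectProperty.homMk T.mor₂)))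
      (H.map (Quiver.Hom.op (show (⟨T.obj₁, h1⟩ : Cpt C) ⟶ ⟨T.obj₂, h2⟩ from ObjectProperty.homMk T.mor₁)))

end Triangulated

section Brown

variable [Preadditive C] [HasZeroObject C] [HasShift C ℤ]
  [∀ n : ℤ, (shiftFunctor C n).Additive] [Pretriangulated C] [HasCoproducts.{v} C]

variable (C) in
/-- A Brown category: a compactly generated triangulated category in which the restricted
Yoneda functor `h` is full and the functors isomorphic to some `h_X` are exactly the
cohomological ones. -/
def IsBrownCategory : Prop :=
  CompactlyGenerated C ∧ HIsFull C ∧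
    ∀ H : (Cpt C)ᵒᵖ ⥤ AddCommGrpCat.{v},
      ((∃ X : C, Nonempty (hFunctor X ≅ H)) ↔ IsCohomological H)

end Brown

section WeakColimit

variable [Preadditive C] [HasCoproducts.{v} C]

/-- A cocone `c` on a filtered diagram of compact objects is a weak colimit if for every `Y`
the induced map `Hom(c.pt, Y) → lim_I Hom(Xᵢ, Y)` is surjective. -/
def IsWeakColimit {I : Type v} [SmallCategory I] (X : I ⥤ Cpt C)
    (c : Cocone (X ⋙ cptInclusion C)) : Prop :=
  ∀ (Y : C) (f : ∀ i, (X ⋙ cptInclusion C).obj i ⟶ Y),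
    (∀ {i j : I} (φ : i ⟶ j), (X ⋙ cptInclusion C).map φ ≫ f j = f i) →
    ∃ g : c.pt ⟶ Y, ∀ i, c.ι.app i ≫ g = f i

/-- A weak colimit is minimal if for every compact `Z` the canonical map
`colim_I Hom(Z, Xᵢ) → Hom(Z, c.pt)` is bijective (expressed elementwise, as appropriate for a
filtered colimit of abelian groups). -/
def IsMinimalWeakColimit {I : Type v} [SmallCategory I] (X : I ⥤ Cpt C)
    (c : Cocone (X ⋙ cptInclusion C)) : Prop :=
  IsWeakColimit X c ∧
    ∀ Z : Cpt C,
      (∀ g : Z.obj ⟶ c.pt, ∃ (i : I) (f : Z.obj ⟶ (X ⋙ cptInclusion C).obj i),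
        f ≫ c.ι.app i = g) ∧
      (∀ (i j : I) (f : Z.obj ⟶ (X ⋙ cptInclusion C).obj i)
        (f' : Z.obj ⟶ (X ⋙ cptInclusion C).obj j), f ≫ c.ι.app i = f' ≫ c.ι.app j →
        ∃ (k : I) (α : i ⟶ k) (β : j ⟶ k),
          f ≫ (X ⋙ cptInclusion C).map α = f' ≫ (X ⋙ cptInclusion C).map β)

end WeakColimit

/-!
The functors `h_{X i}` have a colimit `H` in the category of functors `Fᵒᵖ ⥤ Ab`. It is computed
objectwise, and filtered colimits of abelian groups are exact, so `H` is cohomological; hence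
`H ≅ h_U` for some `U`, and fullness of `h` lifts the colimit cocone to a cocone with vertex `U`.
Because `h` carries it to a filtered colimit, this cocone is a minimal weak colimit.

If `U` is the vertex of a minimal weak colimit and `V` that of a weak colimit, there are maps
`s : U ⟶ V` and `r : V ⟶ U` under the diagram. Every map from a compact object into `U` factors
through some `X i`, so `s ≫ r` fixes all of them. Then the cone of `s ≫ r` receives no nonzero
maps from (shifts of) compact objects, so it is zero by compact generation and `s ≫ r` is an
isomorphism.
-/

section FilteredColimit

variable {I : Type v} [SmallCategory I] {J : Type*} [Category J]
  {K : I ⥤ J ⥤ AddCommGrpCat.{v}} {t : Cocone K}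

lemma pt_map_ι_app {i : I} {j j' : J} (a : j ⟶ j') (y : (K.obj i).obj j) :
    t.pt.map a ((t.ι.app i).app j y) = (t.ι.app i).app j' ((K.obj i).map a y) :=
  (NatTrans.naturality_apply (t.ι.app i) a y).symm

lemma ι_app_map_app {i k : I} (α : i ⟶ k) {j : J} (y : (K.obj i).obj j) :
    (t.ι.app k).app j ((K.map α).app j y) = (t.ι.app i).app j y := by
  rw [← ConcreteCategory.comp_apply, ← NatTrans.comp_app, t.w]

variable [IsFiltered I]

lemma exists_ι_app_eq_of_isColimit (ht : IsColimit t) {j : J} (x : t.pt.obj j) :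
    ∃ (i : I) (y : (K.obj i).obj j), (t.ι.app i).app j y = x :=
  Concrete.isColimit_exists_rep _ (isColimitOfPreserves ((evaluation J _).obj j) ht) x

lemma ι_app_eq_iff_of_isColimit (ht : IsColimit t) {i i' : I} {j : J} (y : (K.obj i).obj j)
    (y' : (K.obj i').obj j) :
    (t.ι.app i).app j y = (t.ι.app i').app j y' ↔
      ∃ (k : I) (α : i ⟶ k) (β : i' ⟶ k), (K.map α).app j y = (K.map β).app j y' :=
  Concrete.isColimit_rep_eq_iff_exists _ (isColimitOfPreserves ((evaluation J _).obj j) ht) y y'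

lemma ι_app_eq_zero_iff_of_isColimit (ht : IsColimit t) {i : I} {j : J} (y : (K.obj i).obj j) :
    (t.ι.app i).app j y = 0 ↔ ∃ (k : I) (α : i ⟶ k), (K.map α).app j y = 0 := by
  rw [show (0 : t.pt.obj j) = (t.ι.app i).app j 0 from (map_zero _).symm,
    ι_app_eq_iff_of_isColimit ht]
  simp only [map_zero]
  exact ⟨fun ⟨k, α, _, h⟩ => ⟨k, α, h⟩, fun ⟨k, α, h⟩ => ⟨k, α, α, h⟩⟩

lemma additive_pt_of_isColimit [Preadditive J] (ht : IsColimit t)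
    [∀ i, (K.obj i).Additive] : t.pt.Additive where
  map_add {j j' f g} := by
    ext x
    obtain ⟨i, y, rfl⟩ := exists_ι_app_eq_of_isColimit ht x
    simp only [AddCommGrpCat.hom_add, AddMonoidHom.add_apply, pt_map_ι_app, Functor.map_add,
      map_add]

lemma exact_pt_map_of_isColimit (ht : IsColimit t) {j₁ j₂ j₃ : J} (a : j₁ ⟶ j₂) (b : j₂ ⟶ j₃)
    (hK : ∀ i, Function.Exact ((K.obj i).map a) ((K.obj i).map b)) :
    Function.Exact (t.pt.map a) (t.pt.map b) := by
  refine Function.Exact.of_comp_of_mem_range (funext fun x => ?_) fun x hx => ?_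
  · obtain ⟨i, y, rfl⟩ := exists_ι_app_eq_of_isColimit ht x
    simp only [Function.comp_apply, pt_map_ι_app, (hK i).apply_apply_eq_zero, map_zero]
    rfl
  · obtain ⟨i, y, rfl⟩ := exists_ι_app_eq_of_isColimit ht x
    rw [pt_map_ι_app, ι_app_eq_zero_iff_of_isColimit ht] at hx
    obtain ⟨k, α, hα⟩ := hx
    rw [NatTrans.naturality_apply] at hα
    obtain ⟨z, hz⟩ := (hK k _).1 hα
    exact ⟨(t.ι.app k).app j₁ z, by rw [pt_map_ι_app, hz, ι_app_map_app]⟩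

end FilteredColimit

section CompactShift

variable [Preadditive C]

lemma coprodComparison_of {ι : Type w} [inst : DecidableEq ι] (A : C) (X : ι → C)
    [HasCoproduct X] (i : ι) (g : A ⟶ X i) :
    coprodComparison A X (DirectSum.of (fun i => A ⟶ X i) i g) = g ≫ Sigma.ι X i := by
  obtain rfl : inst = Classical.decEq ι := Subsingleton.elim _ _
  classical
  exact DirectSum.toAddMonoid_of (β := fun i => A ⟶ X i) _ i g

variable [HasCoproducts.{v} C]

lemma IsCompactObj.obj_of_adjunction {D : Type*} [Category.{v} D] [Preadditive D]
    [HasCoproducts.{v} D] {F : C ⥤ D} {G : D ⥤ C} (adj : F ⊣ G) [F.Additive]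
    [PreservesColimitsOfSize.{v, v} G] {A : C} (hA : IsCompactObj A) :
    IsCompactObj (F.obj A) := by
  intro ι X
  classical
  let φ := PreservesCoproduct.iso G X
  have hι : ∀ i, G.map (Sigma.ι X i) ≫ φ.hom = Sigma.ι (fun i => G.obj (X i)) i := fun i => by
    rw [← ι_comp_sigmaComparison, ← PreservesCoproduct.inv_hom, Category.assoc, Iso.inv_hom_id,
      Category.comp_id]
  have hcomm : (Preadditive.rightComp A φ.hom).comp
      ((adj.homAddEquiv A (∐ X)).toAddMonoidHom.comp (coprodComparison (F.obj A) X)) =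
      (coprodComparison A fun i => G.obj (X i)).comp
        (DirectSum.map fun i => (adj.homAddEquiv A (X i)).toAddMonoidHom) := by
    refine DirectSum.addHom_ext fun i g => ?_
    simp [coprodComparison_of, Preadditive.rightComp, Adjunction.homEquiv_naturality_right, hι]
  have hpost : Function.Bijective fun f : A ⟶ G.obj (∐ X) => f ≫ φ.hom :=
    ⟨fun f f' h => (cancel_mono φ.hom).1 h, fun f => ⟨f ≫ φ.inv, by simp⟩⟩
  have hmap :
      Function.Bijective (DirectSum.map fun i => (adj.homAddEquiv A (X i)).toAddMonoidHom) :=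
    ⟨DirectSum.map_injective _ |>.2 fun i => (adj.homAddEquiv A (X i)).injective,
      DirectSum.map_surjective _ |>.2 fun i => (adj.homAddEquiv A (X i)).surjective⟩
  refine ((hpost.comp (adj.homEquiv A (∐ X)).bijective).of_comp_iff' _).1 ?_
  convert (hA ι _).comp hmap using 1
  exact congrArg DFunLike.coe hcomm

lemma IsCompactObj.shift [HasShift C ℤ] [∀ n : ℤ, (shiftFunctor C n).Additive] {A : C}
    (hA : IsCompactObj A) (n : ℤ) : IsCompactObj ((shiftFunctor C n).obj A) :=
  hA.obj_of_adjunction (F := shiftFunctor C n) (shiftEquiv C n).toAdjunction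

end CompactShift

lemma comp_map_injective_of_adjunction {D : Type*} [Category D] {F : C ⥤ D} {G : D ⥤ C}
    (adj : F ⊣ G) {Z : C} {U V : D} {f : U ⟶ V}
    (hf : Function.Injective fun g : F.obj Z ⟶ U => g ≫ f) :
    Function.Injective fun g : Z ⟶ G.obj U => g ≫ G.map f := fun a b h =>
  (adj.homEquiv Z U).symm.injective <| hf <| by
    simpa [Adjunction.homEquiv_naturality_right_symm] using congrArg (adj.homEquiv Z V).symm h

section Triangulated

variable [Preadditive C] [HasZeroObject C] [HasShift C ℤ]
  [∀ n : ℤ, (shiftFunctor C n).Additive] [Pretriangulated C] [HasCoproducts.{v} C]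

lemma isIso_of_bijective_comp (hgen : CompactlyGenerated C) {U V : C} (f : U ⟶ V)
    (hf : ∀ Z : C, IsCompactObj Z → Function.Bijective fun g : Z ⟶ U => g ≫ f) : IsIso f := by
  obtain ⟨W, m₂, m₃, hT⟩ := distinguished_cocone_triangle f
  obtain ⟨G, hG, hGgen⟩ := hgen
  refine (Triangle.isZero₃_iff_isIso₁ _ hT).1 (hGgen W fun A hA n x => ?_)
  have h₁₂ : f ≫ m₂ = 0 := comp_distTriang_mor_zero₁₂ _ hT
  have h₃₁ : m₃ ≫ f⟦(1 : ℤ)⟧' = 0 := comp_distTriang_mor_zero₃₁ _ hT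
  have hZ := (hG A hA).shift n
  -- `x ≫ m₃` is adjoint to a map out of the compact object `Z⟦-1⟧`, where `f` acts injectively.
  have hx : x ≫ m₃ = 0 :=
    comp_map_injective_of_adjunction (shiftEquiv C (1 : ℤ)).symm.toAdjunction
      (hf _ (hZ.shift (-1))).1
      (show (x ≫ m₃) ≫ f⟦(1 : ℤ)⟧' = 0 ≫ f⟦(1 : ℤ)⟧' by
        rw [Category.assoc, h₃₁, comp_zero, zero_comp])
  obtain ⟨y, rfl⟩ := Triangle.coyoneda_exact₃ _ hT x hx
  obtain ⟨y', rfl⟩ := (hf _ hZ).2 y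
  show (y' ≫ f) ≫ m₂ = 0
  rw [Category.assoc, h₁₂, comp_zero]

end Triangulated

section RestrictedYoneda

variable [Preadditive C] [HasCoproducts.{v} C]

variable (C) in
noncomputable def hYoneda : C ⥤ (Cpt C)ᵒᵖ ⥤ AddCommGrpCat.{v} :=
  preadditiveYoneda ⋙ (Functor.whiskeringLeft _ _ _).obj (cptInclusion C).op

lemma hYoneda_map_injective {A U : C} (hA : IsCompactObj A) :
    Function.Injective ((hYoneda C).map : (A ⟶ U) → _) := fun u u' h =>
  (Category.id_comp u).symm.trans <|
    (congrArg (fun φ => φ.app (Opposite.op ⟨A, hA⟩) (𝟙 A)) h).trans (Category.id_comp u')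

variable {I : Type v} [SmallCategory I] {X : I ⥤ Cpt C} {c : Cocone (X ⋙ cptInclusion C)}

lemma isWeakColimit_of_isColimit_mapCocone (hfull : HIsFull C)
    (hc : IsColimit ((hYoneda C).mapCocone c)) : IsWeakColimit X c := by
  intro Y f hf
  let s : Cocone (X ⋙ cptInclusion C) :=
    { pt := Y, ι := { app := f, naturality := fun i j φ => by simpa using hf φ } }
  obtain ⟨g, hg⟩ := hfull _ _ (hc.desc ((hYoneda C).mapCocone s))
  refine ⟨g, fun i => hYoneda_map_injective (X.obj i).property ?_⟩
  rw [Functor.map_comp]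
  exact (congrArg _ hg).trans (hc.fac _ i)

lemma isMinimalWeakColimit_of_isColimit_mapCocone [IsFiltered I] (hfull : HIsFull C)
    (hc : IsColimit ((hYoneda C).mapCocone c)) : IsMinimalWeakColimit X c :=
  ⟨isWeakColimit_of_isColimit_mapCocone hfull hc, fun Z =>
    ⟨fun g => exists_ι_app_eq_of_isColimit hc (j := Opposite.op Z) g,
      fun _ _ f f' h => (ι_app_eq_iff_of_isColimit hc (j := Opposite.op Z) f f').1 h⟩⟩

end RestrictedYoneda

section Brown

variable [Preadditive C] [HasZeroObject C] [HasShift C ℤ]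
  [∀ n : ℤ, (shiftFunctor C n).Additive] [Pretriangulated C] [HasCoproducts.{v} C]
  {I : Type v} [SmallCategory I]

lemma isCohomological_of_isColimit [IsFiltered I] {K : I ⥤ (Cpt C)ᵒᵖ ⥤ AddCommGrpCat.{v}}
    {t : Cocone K} (ht : IsColimit t) (hK : ∀ i, IsCohomological (K.obj i)) :
    IsCohomological t.pt :=
  have := fun i => (hK i).1
  ⟨additive_pt_of_isColimit ht, fun T hT h₁ h₂ h₃ =>
    exact_pt_map_of_isColimit ht _ _ fun i => (hK i).2 T hT h₁ h₂ h₃⟩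

lemma exists_cocone_isColimit_mapCocone (hBrown : IsBrownCategory C) [IsFiltered I]
    (X : I ⥤ Cpt C) :
    ∃ c : Cocone (X ⋙ cptInclusion C), Nonempty (IsColimit ((hYoneda C).mapCocone c)) := by
  obtain ⟨-, hfull, hrep⟩ := hBrown
  let K := (X ⋙ cptInclusion C) ⋙ hYoneda C
  have hK : IsCohomological (colimit K) :=
    isCohomological_of_isColimit (colimit.isColimit K) fun _ => (hrep _).1 ⟨_, ⟨Iso.refl _⟩⟩
  obtain ⟨U, ⟨Φ⟩⟩ := (hrep _).2 hK
  choose u hu using fun i => hfull _ U (colimit.ι K i ≫ Φ.inv)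
  have hw : ∀ ⦃i j : I⦄ (φ : i ⟶ j), (X ⋙ cptInclusion C).map φ ≫ u j = u i := fun i j φ =>
    hYoneda_map_injective (X.obj i).property <| ((hYoneda C).map_comp _ _).trans <|
      show K.map φ ≫ hMap (u j) = hMap (u i) by
        rw [hu, hu]; exact colimit.w_assoc K φ Φ.inv
  let c : Cocone (X ⋙ cptInclusion C) :=
    { pt := U, ι := { app := u, naturality := fun i j φ => by simpa using hw φ } }
  exact ⟨c, ⟨(colimit.isColimit K).ofIsoColimit (Cocone.ext Φ.symm fun i => (hu i).symm)⟩⟩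

lemma isIso_of_isMinimalWeakColimit (hgen : CompactlyGenerated C) {X : I ⥤ Cpt C}
    {c : Cocone (X ⋙ cptInclusion C)} (hc : IsMinimalWeakColimit X c) (e : c.pt ⟶ c.pt)
    (he : ∀ i, c.ι.app i ≫ e = c.ι.app i) : IsIso e := by
  refine isIso_of_bijective_comp hgen e fun Z hZ => ?_
  convert Function.bijective_id using 1
  funext g
  obtain ⟨i, f, rfl⟩ := (hc.2 ⟨Z, hZ⟩).1 g
  simp [he]

end Brown

variable [Preadditive C] [HasZeroObject C] [HasShift C ℤ]
  [∀ n : ℤ, (shiftFunctor C n).Additive] [Pretriangulated C] [IsTriangulated C]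
  [HasCoproducts.{v} C]

/-- in a Brown category, every filtered diagram of compact objects admits a
minimal weak colimit, and the vertex of a minimal weak colimit is a retract of the vertex of
any weak colimit of the same diagram. -/
theorem minimal_weak_colimit_exists (hBrown : IsBrownCategory C)
    (I : Type v) [SmallCategory I] [IsFiltered I] (X : I ⥤ Cpt C) :
    (∃ c : Cocone (X ⋙ cptInclusion C), IsMinimalWeakColimit X c) ∧
      ∀ (c c' : Cocone (X ⋙ cptInclusion C)), IsMinimalWeakColimit X c → IsWeakColimit X c' →
        ∃ (s : c.pt ⟶ c'.pt) (r : c'.pt ⟶ c.pt), s ≫ r = 𝟙 c.pt := by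
  refine ⟨?_, fun c c' hc hc' => ?_⟩
  · obtain ⟨c, ⟨hc⟩⟩ := exists_cocone_isColimit_mapCocone hBrown X
    exact ⟨c, isMinimalWeakColimit_of_isColimit_mapCocone hBrown.2.1 hc⟩
  · obtain ⟨s, hs⟩ := hc.1 c'.pt c'.ι.app fun φ => c'.w φ
    obtain ⟨r, hr⟩ := hc' c.pt c.ι.app fun φ => c.w φ
    have : IsIso (s ≫ r) := isIso_of_isMinimalWeakColimit hBrown.1 hc _ fun i => by
      rw [← Category.assoc, hs, hr]
    exact ⟨s, r ≫ inv (s ≫ r), by rw [← Category.assoc, IsIso.hom_inv_id]⟩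

end AxStable
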